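/- arXiv:0812.3278 — 4 statements merged into one kernel-verified Lean document; each statement's English description precedes it below -/
import Mathlib

section
/- Let a, b, c, d, e, f be nonnegative integers and suppose that s := ((a+c-e)+2(b+d-f))/3 and t := ((a+c-e)-(b+d-f))/3 are integers. Let J be the set of integers j satisfying: 0 ≤ j, j ≤ s+t, s+t ≤ c+d, 0 ≤ s-j, s-j ≤ d, s+t-j ≤ a, j ≤ b, j ≤ b+t, j ≤ c-t, and j ≤ c. If t ≥ 0, the linear maps (π_{e,f} ∘ μ_e ∘ θ^t ∘ μ_x ∘ β^j ∘ α^{s-j})|_{V(a,b)⊗V(c,d)} : V(a,b)⊗V(c,d) → V(e,f), for j ∈ J, are linearly independent over ℂ; if t ≤ 0, the maps (π_{e,f} ∘ μ_x ∘ ω^{-t} ∘ μ_e ∘ β^j ∘ α^{s+t-j})|_{V(a,b)⊗V(c,d)}, for j ∈ J, are linearly independent over ℂ. -/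
open MvPolynomial

noncomputable section

/-- The polynomial ring `R₂ = ℂ[e₁,e₂,e₃,x₁,x₂,x₃,e₁',e₂',e₃',x₁',x₂',x₃']`:
variables `0,1,2` are `e₁,e₂,e₃`; `3,4,5` are `x₁,x₂,x₃`; `6,7,8` are `e₁',e₂',e₃'`;
`9,10,11` are `x₁',x₂',x₃'`. -/
abbrev R12 : Type := MvPolynomial (Fin 12) ℂ

/-- the variable `eᵢ` -/
def ev (i : Fin 3) : Fin 12 := ⟨i.val, by omega⟩

/-- the variable `xᵢ` -/
def xv (i : Fin 3) : Fin 12 := ⟨i.val + 3, by omega⟩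

/-- the variable `eᵢ'` -/
def ep (i : Fin 3) : Fin 12 := ⟨i.val + 6, by omega⟩

/-- the variable `xᵢ'` -/
def xp (i : Fin 3) : Fin 12 := ⟨i.val + 9, by omega⟩

/-- `α = Σᵢ (∂/∂eᵢ)∘(∂/∂xᵢ')` -/
def α : Module.End ℂ R12 :=
  ∑ i : Fin 3, (pderiv (ev i)).toLinearMap ∘ₗ (pderiv (xp i)).toLinearMap

/-- `β = Σᵢ (∂/∂xᵢ)∘(∂/∂eᵢ')` -/
def β : Module.End ℂ R12 :=
  ∑ i : Fin 3, (pderiv (xv i)).toLinearMap ∘ₗ (pderiv (ep i)).toLinearMap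

/-- `θ = Σ_{σ∈S₃} sgn(σ)·(∂/∂e_{σ(1)})∘(∂/∂e'_{σ(2)})∘(mult. by x_{σ(3)})` -/
def θ : Module.End ℂ R12 :=
  ∑ σ : Equiv.Perm (Fin 3), ((Equiv.Perm.sign σ : ℤ) : ℂ) •
    ((pderiv (ev (σ 0))).toLinearMap ∘ₗ (pderiv (ep (σ 1))).toLinearMap ∘ₗ
      LinearMap.mulLeft ℂ (X (xv (σ 2))))

/-- `ω = Σ_{σ∈S₃} sgn(σ)·(mult. by e_{σ(1)})∘(∂/∂x_{σ(2)})∘(∂/∂x'_{σ(3)})` -/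
def ω : Module.End ℂ R12 :=
  ∑ σ : Equiv.Perm (Fin 3), ((Equiv.Perm.sign σ : ℤ) : ℂ) •
    (LinearMap.mulLeft ℂ (X (ev (σ 0))) ∘ₗ (pderiv (xv (σ 1))).toLinearMap ∘ₗ
      (pderiv (xp (σ 2))).toLinearMap)

/-- `μ_e` : the algebra homomorphism substituting `eᵢ' := eᵢ` and fixing all other variables -/
def μe : R12 →ₐ[ℂ] R12 :=
  aeval (fun k : Fin 12 =>
    if h : 6 ≤ k.val ∧ k.val < 9 then X (⟨k.val - 6, by omega⟩ : Fin 12) else X k)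

/-- `μ_x` : the algebra homomorphism substituting `xᵢ' := xᵢ` and fixing all other variables -/
def μx : R12 →ₐ[ℂ] R12 :=
  aeval (fun k : Fin 12 =>
    if h : 9 ≤ k.val then X (⟨k.val - 6, by have := k.isLt; omega⟩ : Fin 12) else X k)

/-- weight recording the total degree in the `e`-variables -/
def wE : Fin 12 → ℕ := fun i => if i.val < 3 then 1 else 0

/-- weight recording the total degree in the `x`-variables -/
def wX : Fin 12 → ℕ := fun i => if 3 ≤ i.val ∧ i.val < 6 then 1 else 0

/-- weight recording the total degree in the `e'`-variables -/
def wEp : Fin 12 → ℕ := fun i => if 6 ≤ i.val ∧ i.val < 9 then 1 else 0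

/-- weight recording the total degree in the `x'`-variables -/
def wXp : Fin 12 → ℕ := fun i => if 9 ≤ i.val then 1 else 0

/-- polynomials of multidegree `(a,b,c,d)` in the variable groups `(e,x,e',x')` -/
def SD4 (a b c d : ℕ) : Submodule ℂ R12 :=
  weightedHomogeneousSubmodule ℂ wE a ⊓ weightedHomogeneousSubmodule ℂ wX b ⊓
  weightedHomogeneousSubmodule ℂ wEp c ⊓ weightedHomogeneousSubmodule ℂ wXp d

/-- `S^eD^f`, realized inside `R₂` as the polynomials of multidegree `(e,f,0,0)` -/
def SD2 (e f : ℕ) : Submodule ℂ R12 := SD4 e f 0 0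

/-- `Δ = Σᵢ (∂/∂eᵢ)∘(∂/∂xᵢ)` on `R₂` (unprimed variables) -/
def Δ₂ : Module.End ℂ R12 :=
  ∑ i : Fin 3, (pderiv (ev i)).toLinearMap ∘ₗ (pderiv (xv i)).toLinearMap

/-- `Δ' = Σᵢ (∂/∂eᵢ')∘(∂/∂xᵢ')` on `R₂` (primed variables) -/
def Δ₂' : Module.End ℂ R12 :=
  ∑ i : Fin 3, (pderiv (ep i)).toLinearMap ∘ₗ (pderiv (xp i)).toLinearMap

/-- `δ` = multiplication by `e₁x₁+e₂x₂+e₃x₃`, acting on the copy of `R` inside `R₂` -/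
def δ₂ : Module.End ℂ R12 :=
  LinearMap.mulLeft ℂ (∑ i : Fin 3, X (ev i) * X (xv i))

/-- `V(a,b)⊗V(c,d)`, realized inside `R₂` as the polynomials of multidegree `(a,b,c,d)` in the
variable groups `(e,x,e',x')` annihilated by `Δ` and `Δ'`. -/
def VV (a b c d : ℕ) : Submodule ℂ R12 :=
  SD4 a b c d ⊓ LinearMap.ker Δ₂ ⊓ LinearMap.ker Δ₂'

/-- `V(e,f) = ker Δ ∩ S^eD^f`, realized inside `R₂` -/
def V2 (e f : ℕ) : Submodule ℂ R12 := LinearMap.ker Δ₂ ⊓ SD2 e f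

/-- `S^{e-1}D^{f-1}`, interpreted as `0` when `e = 0` or `f = 0` -/
def SDsub2 (e f : ℕ) : Submodule ℂ R12 :=
  if e = 0 ∨ f = 0 then ⊥ else SD2 (e - 1) (f - 1)

/-- the inequalities defining the index set `J` of Theorem 3.1 -/
def Jcond (a b c d : ℕ) (s t j : ℤ) : Prop :=
  0 ≤ j ∧ j ≤ s + t ∧ s + t ≤ (c : ℤ) + d ∧ 0 ≤ s - j ∧ s - j ≤ (d : ℤ) ∧
  s + t - j ≤ (a : ℤ) ∧ j ≤ (b : ℤ) ∧ j ≤ (b : ℤ) + t ∧ j ≤ (c : ℤ) - t ∧ j ≤ (c : ℤ)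

/-- the composite map `π_{e,f} ∘ μ_e ∘ θ^t ∘ μ_x ∘ β^j ∘ α^{s-j}` (case `t ≥ 0`) -/
def famθ (π : Module.End ℂ R12) (s t j : ℤ) : Module.End ℂ R12 :=
  π ∘ₗ μe.toLinearMap ∘ₗ (θ ^ t.toNat) ∘ₗ μx.toLinearMap ∘ₗ
    (β ^ j.toNat) ∘ₗ (α ^ (s - j).toNat)

/-- the composite map `π_{e,f} ∘ μ_x ∘ ω^{-t} ∘ μ_e ∘ β^j ∘ α^{s+t-j}` (case `t ≤ 0`) -/
def famω (π : Module.End ℂ R12) (s t j : ℤ) : Module.End ℂ R12 :=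
  π ∘ₗ μx.toLinearMap ∘ₗ (ω ^ (-t).toNat) ∘ₗ μe.toLinearMap ∘ₗ
    (β ^ j.toNat) ∘ₗ (α ^ (s + t - j).toNat)


/-!
Both families are shown to be linearly independent by a diagonal system of test vectors: for
every `k ∈ J` there is a monomial `v_k ∈ V(a,b) ⊗ V(c,d)` that the `j`-th map kills for `j ≠ k`
but not for `j = k`. For `t ≥ 0` take `v_k = e₁^a x₂^(b-k) x₃^k e₃'^c x₁'^(s-k) x₂'^(d-s+k)`. On
such monomials `α` acts only through `∂e₁ ∂x₁'` and `β` only through `∂x₃ ∂e₃'`, so `α^(s-j)`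
kills `v_k` when `j < k` and `β^j` kills what is left when `j > k`. For `j = k` each of `α`, `β`,
`θ` acts on the monomial it meets through a single term with nonzero coefficient, ending at a
multiple of `e₁^(a-s+k-t) e₃^(c-k-t) x₂^f`. This monomial is not divisible by any `eᵢxᵢ`, so its
coefficient vanishes on the image of `δ`, and it survives the projection `π_{e,f}`. For `t ≤ 0`
take `v_k = e₂^(s+t-k) e₃^(a-s-t+k) x₁^b e₁'^k e₃'^(c-k) x₂'^d` instead.
-/

open Function

theorem LinearIndependent.of_pairwise_apply_eq_zero {K ι M N : Type*} [Field K]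
    [AddCommGroup M] [Module K M] [AddCommGroup N] [Module K N] (f : ι → M →ₗ[K] N) (v : ι → M)
    (h₁ : Pairwise fun i j => f i (v j) = 0) (h₂ : ∀ i, f i (v i) ≠ 0) :
    LinearIndependent K f := by
  refine linearIndependent_iff'.mpr fun s g hrel i hi => ?_
  have := LinearMap.congr_fun hrel (v i)
  rw [LinearMap.sum_apply, Finset.sum_eq_single i (fun j _ hji => by simp [h₁ hji])
    (fun h => absurd hi h)] at this
  simpa [h₂ i] using this

theorem Module.End.pow_apply_eq_prod_smul {R M : Type*} [CommSemiring R] [AddCommMonoid M]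
    [Module R M] (L : Module.End R M) (F : ℕ → M) (c : ℕ → R) (h : ∀ n, L (F n) = c n • F (n + 1))
    (n : ℕ) : (L ^ n) (F 0) = (∏ k ∈ Finset.range n, c k) • F n := by
  induction n with
  | zero => simp
  | succ n ih =>
    rw [pow_succ', Module.End.mul_apply, ih, map_smul, h, smul_smul, Finset.prod_range_succ]

section equivFunOnFinite

variable {σ R : Type*} [Fintype σ] [DecidableEq σ] [CommSemiring R] (g : σ → ℕ) (k : σ) (c : R)

theorem MvPolynomial.pderiv_monomial_equivFunOnFinite :
    pderiv k (monomial (Finsupp.equivFunOnFinite.symm g) c) =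
      monomial (Finsupp.equivFunOnFinite.symm (update g k (g k - 1))) (c * g k) := by
  have : Finsupp.equivFunOnFinite.symm g - Finsupp.single k 1 =
      Finsupp.equivFunOnFinite.symm (update g k (g k - 1)) := by
    ext j
    rcases eq_or_ne j k with rfl | h <;> simp [*]
  rw [pderiv_monomial, this]
  rfl

theorem MvPolynomial.X_mul_monomial_equivFunOnFinite :
    X k * monomial (Finsupp.equivFunOnFinite.symm g) c =
      monomial (Finsupp.equivFunOnFinite.symm (update g k (g k + 1))) c := by
  have : Finsupp.single k 1 + Finsupp.equivFunOnFinite.symm g =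
      Finsupp.equivFunOnFinite.symm (update g k (g k + 1)) := by
    ext j
    rcases eq_or_ne j k with rfl | h <;> simp [*, add_comm]
  rw [X, monomial_mul, one_mul, this]

end equivFunOnFinite

@[to_additive]
theorem prod_fin_twelve_eq_prod_groups {M : Type*} [CommMonoid M] (f : Fin 12 → M) :
    ∏ k, f k = ∏ i : Fin 3, f (ev i) * f (xv i) * f (ep i) * f (xp i) := by
  rw [← (finProdFinEquiv : Fin 4 × Fin 3 ≃ Fin 12).prod_comp, Fintype.prod_prod_type,
    Fin.prod_univ_four, ← Finset.prod_mul_distrib, ← Finset.prod_mul_distrib,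
    ← Finset.prod_mul_distrib]
  rfl

def monoExp (e x e' x' : Fin 3 → ℕ) : Fin 12 → ℕ := fun k =>
  if h : k.val < 3 then e ⟨k, h⟩ else if h : k.val < 6 then x ⟨k - 3, by omega⟩
  else if h : k.val < 9 then e' ⟨k - 6, by omega⟩ else x' ⟨k - 9, by omega⟩

def mono (e x e' x' : Fin 3 → ℕ) : R12 :=
  monomial (Finsupp.equivFunOnFinite.symm (monoExp e x e' x')) 1

section mono

variable (e x e' x' : Fin 3 → ℕ) (i : Fin 3) (n : ℕ)

@[simp] theorem monoExp_ev : monoExp e x e' x' (ev i) = e i := by fin_cases i <;> rfl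
@[simp] theorem monoExp_xv : monoExp e x e' x' (xv i) = x i := by fin_cases i <;> rfl
@[simp] theorem monoExp_ep : monoExp e x e' x' (ep i) = e' i := by fin_cases i <;> rfl
@[simp] theorem monoExp_xp : monoExp e x e' x' (xp i) = x' i := by fin_cases i <;> rfl

theorem update_monoExp_ev :
    update (monoExp e x e' x') (ev i) n = monoExp (update e i n) x e' x' := by
  funext k; fin_cases i <;> fin_cases k <;> rfl

theorem update_monoExp_xv :
    update (monoExp e x e' x') (xv i) n = monoExp e (update x i n) e' x' := by
  funext k; fin_cases i <;> fin_cases k <;> rfl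

theorem update_monoExp_ep :
    update (monoExp e x e' x') (ep i) n = monoExp e x (update e' i n) x' := by
  funext k; fin_cases i <;> fin_cases k <;> rfl

theorem update_monoExp_xp :
    update (monoExp e x e' x') (xp i) n = monoExp e x e' (update x' i n) := by
  funext k; fin_cases i <;> fin_cases k <;> rfl

theorem pderiv_ev_mono :
    pderiv (ev i) (mono e x e' x') = (e i : ℂ) • mono (update e i (e i - 1)) x e' x' := by
  rw [mono, pderiv_monomial_equivFunOnFinite, monoExp_ev, update_monoExp_ev, mono,
    smul_monomial, smul_eq_mul, one_mul, mul_one]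

theorem pderiv_xv_mono :
    pderiv (xv i) (mono e x e' x') = (x i : ℂ) • mono e (update x i (x i - 1)) e' x' := by
  rw [mono, pderiv_monomial_equivFunOnFinite, monoExp_xv, update_monoExp_xv, mono,
    smul_monomial, smul_eq_mul, one_mul, mul_one]

theorem pderiv_ep_mono :
    pderiv (ep i) (mono e x e' x') = (e' i : ℂ) • mono e x (update e' i (e' i - 1)) x' := by
  rw [mono, pderiv_monomial_equivFunOnFinite, monoExp_ep, update_monoExp_ep, mono,
    smul_monomial, smul_eq_mul, one_mul, mul_one]

theorem pderiv_xp_mono :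
    pderiv (xp i) (mono e x e' x') = (x' i : ℂ) • mono e x e' (update x' i (x' i - 1)) := by
  rw [mono, pderiv_monomial_equivFunOnFinite, monoExp_xp, update_monoExp_xp, mono,
    smul_monomial, smul_eq_mul, one_mul, mul_one]

theorem X_ev_mul_mono : X (ev i) * mono e x e' x' = mono (update e i (e i + 1)) x e' x' := by
  rw [mono, X_mul_monomial_equivFunOnFinite, monoExp_ev, update_monoExp_ev, mono]

theorem X_xv_mul_mono : X (xv i) * mono e x e' x' = mono e (update x i (x i + 1)) e' x' := by
  rw [mono, X_mul_monomial_equivFunOnFinite, monoExp_xv, update_monoExp_xv, mono]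

theorem mono_eq_prod : mono e x e' x' =
    ∏ i, X (ev i) ^ e i * X (xv i) ^ x i * X (ep i) ^ e' i * X (xp i) ^ x' i := by
  rw [mono, monomial_eq, C_1, one_mul, Finsupp.prod_fintype _ _ (fun _ => pow_zero _),
    prod_fin_twelve_eq_prod_groups]
  simp

theorem μe_X_ev : μe (X (ev i)) = X (ev i) := by rw [μe, aeval_X]; fin_cases i <;> rfl
theorem μe_X_xv : μe (X (xv i)) = X (xv i) := by rw [μe, aeval_X]; fin_cases i <;> rfl
theorem μe_X_ep : μe (X (ep i)) = X (ev i) := by rw [μe, aeval_X]; fin_cases i <;> rfl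
theorem μe_X_xp : μe (X (xp i)) = X (xp i) := by rw [μe, aeval_X]; fin_cases i <;> rfl

theorem μx_X_ev : μx (X (ev i)) = X (ev i) := by rw [μx, aeval_X]; fin_cases i <;> rfl
theorem μx_X_xv : μx (X (xv i)) = X (xv i) := by rw [μx, aeval_X]; fin_cases i <;> rfl
theorem μx_X_ep : μx (X (ep i)) = X (ep i) := by rw [μx, aeval_X]; fin_cases i <;> rfl
theorem μx_X_xp : μx (X (xp i)) = X (xv i) := by rw [μx, aeval_X]; fin_cases i <;> rfl

theorem μe_mono : μe (mono e x e' x') = mono (e + e') x 0 x' := by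
  simp only [mono_eq_prod, map_prod, map_mul, map_pow, μe_X_ev, μe_X_xv, μe_X_ep, μe_X_xp]
  refine Finset.prod_congr rfl fun i _ => ?_
  simp only [Pi.add_apply, Pi.zero_apply, pow_add, pow_zero]
  ring

theorem μx_mono : μx (mono e x e' x') = mono e (x + x') e' 0 := by
  simp only [mono_eq_prod, map_prod, map_mul, map_pow, μx_X_ev, μx_X_xv, μx_X_ep, μx_X_xp]
  refine Finset.prod_congr rfl fun i _ => ?_
  simp only [Pi.add_apply, Pi.zero_apply, pow_add, pow_zero]
  ring

theorem weight_monoExp (w : Fin 12 → ℕ) :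
    Finsupp.weight w (Finsupp.equivFunOnFinite.symm (monoExp e x e' x')) =
      ∑ i, (e i * w (ev i) + x i * w (xv i) + e' i * w (ep i) + x' i * w (xp i)) := by
  rw [Finsupp.weight_apply, Finsupp.sum_fintype _ _ (by simp), sum_fin_twelve_eq_sum_groups]
  simp

theorem mono_mem_SD4 :
    mono e x e' x' ∈ SD4 (∑ i, e i) (∑ i, x i) (∑ i, e' i) (∑ i, x' i) := by
  refine ⟨⟨⟨?_, ?_⟩, ?_⟩, ?_⟩ <;>
  · refine (mem_weightedHomogeneousSubmodule _ _ _ _).mpr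
      (isWeightedHomogeneous_monomial _ _ _ ?_)
    rw [weight_monoExp]
    refine Finset.sum_congr rfl fun i _ => ?_
    fin_cases i <;> simp [wE, wX, wEp, wXp, ev, xv, ep, xp]

theorem mono_mem_SD2 : mono e x 0 0 ∈ SD2 (∑ i, e i) (∑ i, x i) := by
  simpa [SD2] using mono_mem_SD4 e x 0 0

theorem α_mono : α (mono e x e' x') = ∑ i, ((e i * x' i : ℕ) : ℂ) •
    mono (update e i (e i - 1)) x e' (update x' i (x' i - 1)) := by
  simp [α, pderiv_ev_mono, pderiv_xp_mono, smul_smul, mul_comm]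

theorem β_mono : β (mono e x e' x') = ∑ i, ((x i * e' i : ℕ) : ℂ) •
    mono e (update x i (x i - 1)) (update e' i (e' i - 1)) x' := by
  simp [β, pderiv_xv_mono, pderiv_ep_mono, smul_smul, mul_comm]

theorem θ_mono : θ (mono e x e' x') = ∑ σ : Equiv.Perm (Fin 3),
    (((Equiv.Perm.sign σ : ℤ) : ℂ) * (e (σ 0) * e' (σ 1) : ℕ)) •
      mono (update e (σ 0) (e (σ 0) - 1)) (update x (σ 2) (x (σ 2) + 1))
        (update e' (σ 1) (e' (σ 1) - 1)) x' := by
  simp only [θ, LinearMap.sum_apply, LinearMap.smul_apply, LinearMap.comp_apply,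
    LinearMap.mulLeft_apply, Derivation.coeFn_coe, X_xv_mul_mono, pderiv_ep_mono, map_smul,
    pderiv_ev_mono, smul_smul]
  refine Finset.sum_congr rfl fun σ _ => ?_
  push_cast
  ring_nf

theorem ω_mono : ω (mono e x e' x') = ∑ σ : Equiv.Perm (Fin 3),
    (((Equiv.Perm.sign σ : ℤ) : ℂ) * (x (σ 1) * x' (σ 2) : ℕ)) •
      mono (update e (σ 0) (e (σ 0) + 1)) (update x (σ 1) (x (σ 1) - 1)) e'
        (update x' (σ 2) (x' (σ 2) - 1)) := by
  simp only [ω, LinearMap.sum_apply, LinearMap.smul_apply, LinearMap.comp_apply,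
    LinearMap.mulLeft_apply, Derivation.coeFn_coe, pderiv_xp_mono, map_smul, pderiv_xv_mono,
    X_ev_mul_mono, smul_smul]
  refine Finset.sum_congr rfl fun σ _ => ?_
  push_cast
  ring_nf

variable {e x e' x'}

theorem Δ₂_mono_eq_zero (h : ∀ i, e i * x i = 0) : Δ₂ (mono e x e' x') = 0 := by
  simp [Δ₂, pderiv_ev_mono, pderiv_xv_mono, smul_smul, ← Nat.cast_mul, mul_comm, h]

theorem Δ₂'_mono_eq_zero (h : ∀ i, e' i * x' i = 0) : Δ₂' (mono e x e' x') = 0 := by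
  simp [Δ₂', pderiv_ep_mono, pderiv_xp_mono, smul_smul, ← Nat.cast_mul, mul_comm, h]

theorem α_pow_mono (i₀ : Fin 3) (h : ∀ i ≠ i₀, e i * x' i = 0) :
    (α ^ n) (mono e x e' x') = (((e i₀).descFactorial n * (x' i₀).descFactorial n : ℕ) : ℂ) •
      mono (update e i₀ (e i₀ - n)) x e' (update x' i₀ (x' i₀ - n)) := by
  have step (k : ℕ) : α (mono (update e i₀ (e i₀ - k)) x e' (update x' i₀ (x' i₀ - k))) =
      (((e i₀ - k) * (x' i₀ - k) : ℕ) : ℂ) •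
        mono (update e i₀ (e i₀ - (k + 1))) x e' (update x' i₀ (x' i₀ - (k + 1))) := by
    rw [α_mono, Finset.sum_eq_single i₀ (fun i _ hi => by simp [hi, h i hi]) (by simp)]
    simp [Nat.sub_sub]
  simpa [Nat.descFactorial_eq_prod_range, Finset.prod_mul_distrib] using
    Module.End.pow_apply_eq_prod_smul α _ _ step n

theorem β_pow_mono (i₀ : Fin 3) (h : ∀ i ≠ i₀, x i * e' i = 0) :
    (β ^ n) (mono e x e' x') = (((x i₀).descFactorial n * (e' i₀).descFactorial n : ℕ) : ℂ) •
      mono e (update x i₀ (x i₀ - n)) (update e' i₀ (e' i₀ - n)) x' := by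
  have step (k : ℕ) : β (mono e (update x i₀ (x i₀ - k)) (update e' i₀ (e' i₀ - k)) x') =
      (((x i₀ - k) * (e' i₀ - k) : ℕ) : ℂ) •
        mono e (update x i₀ (x i₀ - (k + 1))) (update e' i₀ (e' i₀ - (k + 1))) x' := by
    rw [β_mono, Finset.sum_eq_single i₀ (fun i _ hi => by simp [hi, h i hi]) (by simp)]
    simp [Nat.sub_sub]
  simpa [Nat.descFactorial_eq_prod_range, Finset.prod_mul_distrib] using
    Module.End.pow_apply_eq_prod_smul β _ _ step n

theorem θ_pow_mono (he : ∀ i ≠ 0, e i = 0) (he' : ∀ i ≠ 2, e' i = 0) :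
    (θ ^ n) (mono e x e' x') =
      ((-1) ^ n * ((e 0).descFactorial n * (e' 2).descFactorial n : ℕ) : ℂ) •
        mono (update e 0 (e 0 - n)) (update x 1 (x 1 + n)) (update e' 2 (e' 2 - n)) x' := by
  have hσ : ∀ σ : Equiv.Perm (Fin 3), σ 0 = 0 → σ 1 = 2 → σ = Equiv.swap 1 2 := by decide
  have step (k : ℕ) : θ (mono (update e 0 (e 0 - k)) (update x 1 (x 1 + k))
      (update e' 2 (e' 2 - k)) x') = -(((e 0 - k) * (e' 2 - k) : ℕ) : ℂ) •
        mono (update e 0 (e 0 - (k + 1))) (update x 1 (x 1 + (k + 1)))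
          (update e' 2 (e' 2 - (k + 1))) x' := by
    rw [θ_mono, Finset.sum_eq_single (Equiv.swap 1 2) (fun σ _ hσ' => ?_) (by simp)]
    · simp [Equiv.swap_apply_of_ne_of_ne, Nat.sub_sub, add_assoc]
    · by_cases h0 : σ 0 = 0
      · have h1 : σ 1 ≠ 2 := fun h1 => hσ' (hσ σ h0 h1)
        simp [h1, he' _ h1]
      · simp [h0, he _ h0]
  simpa [Nat.descFactorial_eq_prod_range, Finset.prod_mul_distrib, Finset.prod_neg] using
    Module.End.pow_apply_eq_prod_smul θ _ _ step n

theorem ω_pow_mono (hx : ∀ i ≠ 0, x i = 0) (hx' : ∀ i ≠ 1, x' i = 0) :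
    (ω ^ n) (mono e x e' x') = (((x 0).descFactorial n * (x' 1).descFactorial n : ℕ) : ℂ) •
      mono (update e 2 (e 2 + n)) (update x 0 (x 0 - n)) e' (update x' 1 (x' 1 - n)) := by
  have hσ : ∀ σ : Equiv.Perm (Fin 3), σ 1 = 0 → σ 2 = 1 →
      σ = Equiv.swap 0 1 * Equiv.swap 0 2 := by decide
  have step (k : ℕ) : ω (mono (update e 2 (e 2 + k)) (update x 0 (x 0 - k)) e'
      (update x' 1 (x' 1 - k))) = (((x 0 - k) * (x' 1 - k) : ℕ) : ℂ) •
        mono (update e 2 (e 2 + (k + 1))) (update x 0 (x 0 - (k + 1))) e'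
          (update x' 1 (x' 1 - (k + 1))) := by
    rw [ω_mono, Finset.sum_eq_single (Equiv.swap 0 1 * Equiv.swap 0 2) (fun σ _ hσ' => ?_)
      (by simp)]
    · simp [Equiv.swap_apply_of_ne_of_ne, Nat.sub_sub, add_assoc]
    · by_cases h1 : σ 1 = 0
      · have h2 : σ 2 ≠ 1 := fun h2 => hσ' (hσ σ h1 h2)
        simp [h2, hx' _ h2]
      · simp [h1, hx _ h1]
  simpa [Nat.descFactorial_eq_prod_range, Finset.prod_mul_distrib] using
    Module.End.pow_apply_eq_prod_smul ω _ _ step n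

end mono

theorem coeff_δ₂_eq_zero {m : Fin 12 →₀ ℕ} (hm : ∀ i, m (ev i) = 0 ∨ m (xv i) = 0) (q : R12) :
    coeff m (δ₂ q) = 0 := by
  rw [δ₂, LinearMap.mulLeft_apply, Finset.sum_mul, coeff_sum]
  refine Finset.sum_eq_zero fun i _ => ?_
  rcases hm i with h | h
  · rw [mul_assoc, coeff_X_mul', if_neg (by simpa using h)]
  · rw [mul_comm (X (ev i)), mul_assoc, coeff_X_mul', if_neg (by simpa using h)]

theorem ne_zero_of_mono_sub_mem_range_δ₂ {e x e' x' : Fin 3 → ℕ} {p : R12}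
    (hp : mono e x e' x' - p ∈ LinearMap.range δ₂) (hex : ∀ i, e i = 0 ∨ x i = 0) : p ≠ 0 := by
  rintro rfl
  obtain ⟨q, hq⟩ := hp
  have := coeff_δ₂_eq_zero (m := Finsupp.equivFunOnFinite.symm (monoExp e x e' x'))
    (by simpa using hex) q
  rw [hq, sub_zero, mono, coeff_monomial, if_pos rfl] at this
  exact one_ne_zero this

theorem apply_mono_ne_zero_of_projection {e f : ℕ} {π : Module.End ℂ R12}
    (hπ : ∀ p ∈ SD2 e f, p - π p ∈ (SDsub2 e f).map δ₂) {E X : Fin 3 → ℕ}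
    (hE : ∑ i, E i = e) (hX : ∑ i, X i = f) (hEX : ∀ i, E i = 0 ∨ X i = 0) :
    π (mono E X 0 0) ≠ 0 := by
  subst hE hX
  exact ne_zero_of_mono_sub_mem_range_δ₂
    (LinearMap.map_le_range (hπ _ (mono_mem_SD2 E X))) hEX

section testVectors

variable {a b c d K m n n' T : ℕ}

def testθ (a b c d K m : ℕ) : R12 := mono ![a, 0, 0] ![0, b - K, K] ![0, 0, c] ![m, d - m, 0]

theorem testθ_mem_VV (hK : K ≤ b) (hm : m ≤ d) : testθ a b c d K m ∈ VV a b c d := by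
  unfold testθ
  refine ⟨⟨?_, Δ₂_mono_eq_zero (by simp [Fin.forall_fin_succ])⟩,
    Δ₂'_mono_eq_zero (by simp [Fin.forall_fin_succ])⟩
  simpa [Fin.sum_univ_three, Nat.sub_add_cancel hK, Nat.add_sub_cancel' hm] using
    mono_mem_SD4 ![a, 0, 0] ![0, b - K, K] ![0, 0, c] ![m, d - m, 0]

theorem β_pow_α_pow_testθ_eq_zero (h : m < n ∨ K < n') :
    (β ^ n') ((α ^ n) (testθ a b c d K m)) = 0 := by
  rw [testθ, α_pow_mono _ 0 (by simp [Fin.forall_fin_succ]), map_smul,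
    β_pow_mono _ 2 (by simp [Fin.forall_fin_succ])]
  rcases h with h | h <;> simp [Nat.descFactorial_of_lt h]

theorem μe_θ_pow_μx_β_pow_α_pow_testθ (hma : m + T ≤ a) (hKc : K + T ≤ c) :
    ∃ N : ℂ, N ≠ 0 ∧ μe ((θ ^ T) (μx ((β ^ K) ((α ^ m) (testθ a b c d K m))))) =
      N • mono ![a - m - T, 0, c - K - T] ![0, b - K + (d - m) + T, 0] 0 0 := by
  rw [testθ, α_pow_mono _ 0 (by simp [Fin.forall_fin_succ]), map_smul,
    β_pow_mono _ 2 (by simp [Fin.forall_fin_succ]), smul_smul, map_smul, μx_mono,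
    map_smul, θ_pow_mono _ ?_ ?_, smul_smul, map_smul, μe_mono]
  · refine ⟨_, ?_, congrArg (_ • ·) ?_⟩
    · simp only [Fin.isValue, Matrix.cons_val_zero, Matrix.cons_val, update_self, Nat.cast_mul,
        ne_eq, mul_eq_zero, Nat.cast_eq_zero, Nat.descFactorial_eq_zero_iff_lt, pow_eq_zero_iff',
        neg_eq_zero, one_ne_zero, false_and, false_or, or_false, lt_self_iff_false, not_or, not_lt]
      omega
    · congr 1 <;> funext i <;> fin_cases i <;> simp
  all_goals simp [Fin.forall_fin_succ]

def testω (a b c d K m : ℕ) : R12 := mono ![0, m, a - m] ![b, 0, 0] ![K, 0, c - K] ![0, d, 0]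

theorem testω_mem_VV (hm : m ≤ a) (hK : K ≤ c) : testω a b c d K m ∈ VV a b c d := by
  unfold testω
  refine ⟨⟨?_, Δ₂_mono_eq_zero (by simp [Fin.forall_fin_succ])⟩,
    Δ₂'_mono_eq_zero (by simp [Fin.forall_fin_succ])⟩
  simpa [Fin.sum_univ_three, Nat.add_sub_cancel' hm, Nat.add_sub_cancel' hK] using
    mono_mem_SD4 ![0, m, a - m] ![b, 0, 0] ![K, 0, c - K] ![0, d, 0]

theorem β_pow_α_pow_testω_eq_zero (h : m < n ∨ K < n') :
    (β ^ n') ((α ^ n) (testω a b c d K m)) = 0 := by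
  rw [testω, α_pow_mono _ 1 (by simp [Fin.forall_fin_succ]), map_smul,
    β_pow_mono _ 0 (by simp [Fin.forall_fin_succ])]
  rcases h with h | h <;> simp [Nat.descFactorial_of_lt h]

theorem μx_ω_pow_μe_β_pow_α_pow_testω (hKb : K + T ≤ b) (hmd : m + T ≤ d) :
    ∃ N : ℂ, N ≠ 0 ∧ μx ((ω ^ T) (μe ((β ^ K) ((α ^ m) (testω a b c d K m))))) =
      N • mono ![0, 0, a - m + (c - K) + T] ![b - K - T, d - m - T, 0] 0 0 := by
  rw [testω, α_pow_mono _ 1 (by simp [Fin.forall_fin_succ]), map_smul,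
    β_pow_mono _ 0 (by simp [Fin.forall_fin_succ]), smul_smul, map_smul, μe_mono,
    map_smul, ω_pow_mono _ ?_ ?_, smul_smul, map_smul, μx_mono]
  · refine ⟨_, ?_, congrArg (_ • ·) ?_⟩
    · simp only [Fin.isValue, Matrix.cons_val_zero, Matrix.cons_val_one, Nat.cast_mul,
        update_self, ne_eq, mul_eq_zero, Nat.cast_eq_zero, Nat.descFactorial_eq_zero_iff_lt,
        lt_self_iff_false, false_or, or_false, not_or, not_lt]
      omega
    · congr 1 <;> funext i <;> fin_cases i <;> simp
  all_goals simp [Fin.forall_fin_succ]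

end testVectors

section independence

variable {a b c d e f : ℕ} {s t : ℤ} {π : Module.End ℂ R12}
  (hs : 3 * s = ((a : ℤ) + c - e) + 2 * ((b : ℤ) + d - f))
  (ht : 3 * t = ((a : ℤ) + c - e) - ((b : ℤ) + d - f))
  (hπ : ∀ p ∈ SD2 e f, π p ∈ V2 e f ∧ p - π p ∈ (SDsub2 e f).map δ₂)
include hs ht hπ

theorem linearIndependent_famθ (ht₀ : 0 ≤ t) :
    LinearIndependent ℂ (fun j : {j : ℤ // Jcond a b c d s t j} =>
      (famθ π s t j.val).domRestrict (VV a b c d)) := by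
  refine LinearIndependent.of_pairwise_apply_eq_zero _
    (fun k => ⟨testθ a b c d k.1.toNat (s - k.1).toNat,
      testθ_mem_VV (by grind [Jcond]) (by grind [Jcond])⟩) ?_ ?_
  · rintro ⟨j, hj⟩ ⟨k, hk⟩ hjk
    replace hjk : j ≠ k := fun h => hjk (Subtype.ext h)
    unfold Jcond at hj hk
    simp only [LinearMap.domRestrict_apply, famθ, LinearMap.comp_apply, AlgHom.toLinearMap_apply]
    rw [β_pow_α_pow_testθ_eq_zero (by omega)]
    simp only [map_zero]
  · rintro ⟨k, hk⟩
    unfold Jcond at hk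
    obtain ⟨N, hN, hchain⟩ := μe_θ_pow_μx_β_pow_α_pow_testθ (a := a) (b := b) (c := c) (d := d)
      (K := k.toNat) (m := (s - k).toNat) (T := t.toNat) (by omega) (by omega)
    simp only [LinearMap.domRestrict_apply, famθ, LinearMap.comp_apply, AlgHom.toLinearMap_apply]
    rw [hchain, map_smul]
    refine smul_ne_zero hN (apply_mono_ne_zero_of_projection (fun p hp => (hπ p hp).2) ?_ ?_
      fun i => by fin_cases i <;> simp)
    all_goals
      simp only [Fin.sum_univ_three, Matrix.cons_val_zero, Matrix.cons_val_one, Matrix.cons_val,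
        zero_add, add_zero]
      omega

theorem linearIndependent_famω (ht₀ : t ≤ 0) :
    LinearIndependent ℂ (fun j : {j : ℤ // Jcond a b c d s t j} =>
      (famω π s t j.val).domRestrict (VV a b c d)) := by
  refine LinearIndependent.of_pairwise_apply_eq_zero _
    (fun k => ⟨testω a b c d k.1.toNat (s + t - k.1).toNat,
      testω_mem_VV (by grind [Jcond]) (by grind [Jcond])⟩) ?_ ?_
  · rintro ⟨j, hj⟩ ⟨k, hk⟩ hjk
    replace hjk : j ≠ k := fun h => hjk (Subtype.ext h)
    unfold Jcond at hj hk
    simp only [LinearMap.domRestrict_apply, famω, LinearMap.comp_apply, AlgHom.toLinearMap_apply]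
    rw [β_pow_α_pow_testω_eq_zero (by omega)]
    simp only [map_zero]
  · rintro ⟨k, hk⟩
    unfold Jcond at hk
    obtain ⟨N, hN, hchain⟩ := μx_ω_pow_μe_β_pow_α_pow_testω (a := a) (b := b) (c := c) (d := d)
      (K := k.toNat) (m := (s + t - k).toNat) (T := (-t).toNat) (by omega) (by omega)
    simp only [LinearMap.domRestrict_apply, famω, LinearMap.comp_apply, AlgHom.toLinearMap_apply]
    rw [hchain, map_smul]
    refine smul_ne_zero hN (apply_mono_ne_zero_of_projection (fun p hp => (hπ p hp).2) ?_ ?_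
      fun i => by fin_cases i <;> simp)
    all_goals
      simp only [Fin.sum_univ_three, Matrix.cons_val_zero, Matrix.cons_val_one, Matrix.cons_val,
        zero_add, add_zero]
      omega

end independence

/-- Linear independence of the maps of Theorem 3.1: given the projection `π = π_{e,f}` of
`S^eD^f` onto `V(e,f)` along `δ(S^{e-1}D^{f-1})`, the restrictions to `V(a,b)⊗V(c,d)` of the
maps `π_{e,f} ∘ μ_e ∘ θ^t ∘ μ_x ∘ β^j ∘ α^{s-j}` (for `t ≥ 0`), resp. of
`π_{e,f} ∘ μ_x ∘ ω^{-t} ∘ μ_e ∘ β^j ∘ α^{s+t-j}` (for `t ≤ 0`), indexed by `j ∈ J`, are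
linearly independent over `ℂ`. -/
theorem stmt1 (a b c d e f : ℕ) (s t : ℤ)
    (hs : 3 * s = ((a : ℤ) + c - e) + 2 * ((b : ℤ) + d - f))
    (ht : 3 * t = ((a : ℤ) + c - e) - ((b : ℤ) + d - f))
    (π : Module.End ℂ R12)
    (hπ : ∀ p ∈ SD2 e f, π p ∈ V2 e f ∧ p - π p ∈ (SDsub2 e f).map δ₂) :
    (0 ≤ t → LinearIndependent ℂ (fun j : {j : ℤ // Jcond a b c d s t j} =>
      (famθ π s t j.val).domRestrict (VV a b c d))) ∧
    (t ≤ 0 → LinearIndependent ℂ (fun j : {j : ℤ // Jcond a b c d s t j} =>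
      (famω π s t j.val).domRestrict (VV a b c d))) :=
  ⟨linearIndependent_famθ hs ht hπ, linearIndependent_famω hs ht hπ⟩
end
end

section
/- Let a, b, c, d, e, f be nonnegative integers such that s := ((a+c-e)+2(b+d-f))/3 and t := ((a+c-e)-(b+d-f))/3 are integers with t ≥ 0, and let j be an integer satisfying 0 ≤ j, j ≤ s+t, s+t ≤ c+d, 0 ≤ s-j, s-j ≤ d, s+t-j ≤ a, j ≤ b, j ≤ b+t, j ≤ c-t, j ≤ c. Let m := e₁^a · x₃^b · (e₃')^c · (x₁')^d ∈ R₂. Then (μ_e ∘ θ^t ∘ μ_x ∘ β^j ∘ α^{s-j})(m) = λ · e₁^{a-s+j-t} e₃^{c-j-t} x₁^{d-s+j} x₂^{t} x₃^{b-j} for some nonzero constant λ ∈ ℂ; in particular the result is a nonzero monomial lying in S^eD^f. -/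
open MvPolynomial

noncomputable section

/-- the monomial `m = e₁^a · x₃^b · (e₃')^c · (x₁')^d ∈ R₂` -/
def mon (a b c d : ℕ) : R12 :=
  X (ev 0) ^ a * X (xv 2) ^ b * X (ep 2) ^ c * X (xp 0) ^ d

/-!
On the monomials that occur, only one term of each of `α`, `β`, `θ` acts, so each operator maps
such a monomial to a nonzero multiple of a single shifted monomial. Iterating, the composite sends
`m` to a nonzero multiple of a single monomial, and the equations defining `s` and `t` say that
its bidegree is `(e, f)`.
-/

open Equiv

theorem Equiv.Perm.sum_univ_fin_three {M : Type*} [AddCommMonoid M] (f : Perm (Fin 3) → M) :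
    ∑ σ, f σ = f 1 + f (swap 0 1) + f (swap 0 2) + f (swap 1 2) + f (swap 0 1 * swap 1 2) +
      f (swap 1 2 * swap 0 1) := by
  rw [show (Finset.univ : Finset (Perm (Fin 3))) =
    {1, swap 0 1, swap 0 2, swap 1 2, swap 0 1 * swap 1 2, swap 1 2 * swap 0 1} by decide]
  repeat rw [Finset.sum_insert (by decide)]
  rw [Finset.sum_singleton]
  abel

theorem Module.End.exists_pow_apply_eq_smul {R M : Type*} [Semiring R] [NoZeroDivisors R]
    [Nontrivial R] [AddCommMonoid M] [Module R M] (T : Module.End R M) (v : ℕ → ℕ → M)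
    (h : ∀ n m, ∃ c : R, c ≠ 0 ∧ T (v (n + 1) m) = c • v n (m + 1)) (k : ℕ) :
    ∀ m, ∃ C : R, C ≠ 0 ∧ (T ^ k) (v k m) = C • v 0 (m + k) := by
  induction k with
  | zero => exact fun m => ⟨1, one_ne_zero, by simp⟩
  | succ k ih =>
    intro m
    obtain ⟨c, hc, hstep⟩ := h k m
    obtain ⟨C, hC, hpow⟩ := ih (m + 1)
    refine ⟨c * C, mul_ne_zero hc hC, ?_⟩
    rw [pow_succ, Module.End.mul_apply, hstep, map_smul, hpow, smul_smul, add_right_comm, add_assoc]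

def mon' (p q w r u : ℕ) : R12 :=
  X (ev 0) ^ p * X (xv 0) ^ q * X (xv 1) ^ w * X (xv 2) ^ r * X (ep 2) ^ u

theorem α_apply_mon (p q r u : ℕ) :
    α (mon (p + 1) q r (u + 1)) = ((p + 1 : ℂ) * (u + 1)) • mon p q r u := by
  simp [α, mon, Fin.sum_univ_three, pderiv_X, ev, xv, ep, xp, Fin.ext_iff, smul_eq_C_mul,
    mul_comm, mul_assoc, mul_left_comm]

theorem β_apply_mon (p q r u : ℕ) :
    β (mon p (q + 1) (r + 1) u) = ((q + 1 : ℂ) * (r + 1)) • mon p q r u := by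
  simp [β, mon, Fin.sum_univ_three, pderiv_X, ev, xv, ep, xp, Fin.ext_iff, smul_eq_C_mul,
    mul_comm, mul_assoc, mul_left_comm]

/- Only `σ = (2 3)` contributes: the monomial involves no `e`-variable other than `e₁` and no
`e'`-variable other than `e₃'`. -/
theorem θ_apply_mon' (p q w r u : ℕ) :
    θ (mon' (p + 1) q w r (u + 1)) = (-((p + 1 : ℂ) * (u + 1))) • mon' p q (w + 1) r u := by
  rw [θ, LinearMap.sum_apply, Perm.sum_univ_fin_three, mon', mon', pow_succ (X (xv 1)) w]
  simp [pderiv_X, ev, xv, ep, Fin.ext_iff, swap_apply_of_ne_of_ne, smul_eq_C_mul, mul_comm,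
    mul_assoc, mul_left_comm]

theorem μx_mon (p q r u : ℕ) : μx (mon p q r u) = mon' p u 0 q r := by
  simp [μx, mon, mon', ev, xv, ep, xp, mul_comm, mul_assoc, mul_left_comm]

theorem μe_mon' (p q w r u : ℕ) :
    μe (mon' p q w r u) =
      X (ev 0) ^ p * X (xv 0) ^ q * X (xv 1) ^ w * X (xv 2) ^ r * X (ev 2) ^ u := by
  simp [μe, mon', ev, xv, ep]

theorem exists_μe_θ_pow_μx_β_pow_α_pow_mon (p q r u k j t : ℕ) :
    ∃ C : ℂ, C ≠ 0 ∧
      μe ((θ ^ t) (μx ((β ^ j) ((α ^ k) (mon (p + t + k) (q + j) (r + t + j) (u + k)))))) =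
        C • (X (ev 0) ^ p * X (ev 2) ^ r * X (xv 0) ^ u * X (xv 1) ^ t * X (xv 2) ^ q) := by
  have hcoeff (x y : ℕ) : ((x + 1 : ℂ) * (y + 1)) ≠ 0 :=
    mul_ne_zero (Nat.cast_add_one_ne_zero x) (Nat.cast_add_one_ne_zero y)
  obtain ⟨C₁, hC₁, hα⟩ := α.exists_pow_apply_eq_smul
    (fun n _ => mon (p + t + n) (q + j) (r + t + j) (u + n))
    (fun n _ => ⟨_, hcoeff _ _, α_apply_mon (p + t + n) (q + j) (r + t + j) (u + n)⟩) k 0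
  obtain ⟨C₂, hC₂, hβ⟩ := β.exists_pow_apply_eq_smul
    (fun n _ => mon (p + t) (q + n) (r + t + n) u)
    (fun n _ => ⟨_, hcoeff _ _, β_apply_mon (p + t) (q + n) (r + t + n) u⟩) j 0
  obtain ⟨C₃, hC₃, hθ⟩ := θ.exists_pow_apply_eq_smul
    (fun n m => mon' (p + n) u m q (r + n))
    (fun n m => ⟨_, neg_ne_zero.mpr (hcoeff _ _), θ_apply_mon' (p + n) u m q (r + n)⟩) t 0
  simp only [add_zero, zero_add] at hα hβ hθ
  refine ⟨C₁ * C₂ * C₃, mul_ne_zero (mul_ne_zero hC₁ hC₂) hC₃, ?_⟩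
  rw [hα, map_smul, hβ, map_smul μx, map_smul μx, μx_mon, map_smul (θ ^ t), map_smul (θ ^ t), hθ,
    map_smul μe, map_smul μe, map_smul μe, μe_mon', smul_smul, smul_smul]
  exact congrArg _ (by ring)

theorem monomial_mem_SD2 (i₁ i₂ l₁ l₂ l₃ : Fin 3) (p r u t q : ℕ) :
    X (ev i₁) ^ p * X (ev i₂) ^ r * X (xv l₁) ^ u * X (xv l₂) ^ t * X (xv l₃) ^ q ∈
      SD2 (p + r) (u + t + q) := by
  have hev (i : Fin 3) : wE (ev i) = 1 ∧ wX (ev i) = 0 ∧ wEp (ev i) = 0 ∧ wXp (ev i) = 0 := by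
    revert i; decide
  have hxv (i : Fin 3) : wE (xv i) = 0 ∧ wX (xv i) = 1 ∧ wEp (xv i) = 0 ∧ wXp (xv i) = 0 := by
    revert i; decide
  have hom (w : Fin 12 → ℕ) :=
    (((((isWeightedHomogeneous_X ℂ w (ev i₁)).pow p).mul
      ((isWeightedHomogeneous_X ℂ w (ev i₂)).pow r)).mul
      ((isWeightedHomogeneous_X ℂ w (xv l₁)).pow u)).mul
      ((isWeightedHomogeneous_X ℂ w (xv l₂)).pow t)).mul
      ((isWeightedHomogeneous_X ℂ w (xv l₃)).pow q)
  simp only [SD2, SD4, Submodule.mem_inf, mem_weightedHomogeneousSubmodule]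
  refine ⟨⟨⟨?_, ?_⟩, ?_⟩, ?_⟩
  · simpa [hev, hxv] using hom wE
  · simpa [hev, hxv, add_assoc] using hom wX
  · simpa [hev, hxv] using hom wEp
  · simpa [hev, hxv] using hom wXp

/-- Key monomial computation (case `t ≥ 0`): for `j` satisfying the inequalities of
Theorem 3.1, `(μ_e ∘ θ^t ∘ μ_x ∘ β^j ∘ α^{s-j})(m)` is a nonzero multiple of the monomial
`e₁^{a-s+j-t} e₃^{c-j-t} x₁^{d-s+j} x₂^t x₃^{b-j}`, which lies in `S^eD^f`. -/
theorem stmt2 (a b c d e f : ℕ) (s t j : ℤ)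
    (hs : 3 * s = ((a : ℤ) + c - e) + 2 * ((b : ℤ) + d - f))
    (ht : 3 * t = ((a : ℤ) + c - e) - ((b : ℤ) + d - f))
    (htpos : 0 ≤ t)
    (hj : 0 ≤ j ∧ j ≤ s + t ∧ s + t ≤ (c : ℤ) + d ∧
      0 ≤ s - j ∧ s - j ≤ (d : ℤ) ∧ s + t - j ≤ (a : ℤ) ∧ j ≤ (b : ℤ) ∧
      j ≤ (b : ℤ) + t ∧ j ≤ (c : ℤ) - t ∧ j ≤ (c : ℤ)) :
    ∃ lam : ℂ, lam ≠ 0 ∧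
      μe ((θ ^ t.toNat) (μx ((β ^ j.toNat) ((α ^ (s - j).toNat) (mon a b c d))))) =
        lam • (X (ev 0) ^ ((a : ℤ) - s + j - t).toNat * X (ev 2) ^ ((c : ℤ) - j - t).toNat *
          X (xv 0) ^ ((d : ℤ) - s + j).toNat * X (xv 1) ^ t.toNat *
          X (xv 2) ^ ((b : ℤ) - j).toNat) ∧
      (X (ev 0) ^ ((a : ℤ) - s + j - t).toNat * X (ev 2) ^ ((c : ℤ) - j - t).toNat *
        X (xv 0) ^ ((d : ℤ) - s + j).toNat * X (xv 1) ^ t.toNat *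
        X (xv 2) ^ ((b : ℤ) - j).toNat) ∈ SD2 e f := by
  obtain ⟨h0j, -, -, h0sj, hsjd, hstja, hjb, -, hjct, -⟩ := hj
  obtain ⟨C, hC, hchain⟩ := exists_μe_θ_pow_μx_β_pow_α_pow_mon (a - s + j - t).toNat
    (b - j).toNat (c - j - t).toNat (d - s + j).toNat (s - j).toNat j.toNat t.toNat
  have hmon : mon a b c d = mon ((a - s + j - t).toNat + t.toNat + (s - j).toNat)
      ((b - j).toNat + j.toNat) ((c - j - t).toNat + t.toNat + j.toNat)
      ((d - s + j).toNat + (s - j).toNat) := by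
    congr 1 <;> omega
  obtain rfl : e = (a - s + j - t).toNat + (c - j - t).toNat := by omega
  obtain rfl : f = (d - s + j).toNat + t.toNat + (b - j).toNat := by omega
  rw [hmon]
  exact ⟨C, hC, hchain, monomial_mem_SD2 ..⟩
end
end

section
/- Let a, b, c, d, e, f be nonnegative integers and let s, t, j be integers with 3s = (a + c − e) + 2(b + d − f) and 3t = (a + c − e) − (b + d − f). Then the following are equivalent: (I) there exist nonnegative integers p₁, p₂, p₃, q₁, q₂, q₃ with p₃ = j satisfying all of: p₂ ≤ a; p₃ ≤ b; p₂ + q₂ − a ≤ p₁; p₃ + q₃ − b ≤ p₂; q₁ = 0; q₂ ≤ p₁; q₂ + q₃ ≤ p₁ + p₂; p₁ + p₂ + p₃ = c + d; q₁ + q₂ + q₃ = d; a + b + p₁ = e + f + s; b + p₂ + q₂ = f + s; p₃ + q₃ = s. (II) j satisfies all of: 0 ≤ j; j ≤ s + t; s + t ≤ c + d; 0 ≤ s − j; s − j ≤ d; s + t − j ≤ a; j ≤ b; j ≤ b + t; j ≤ c − t; j ≤ c. -/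
/-!
Dividing the two defining relations by 3 gives `s - t = b + d - f` and `s + 2t = a + c - e`.
With these, the linear equations of (I) determine every count from `p₃ = j`:
`q₃ = s - j`, `q₂ = d - s + j`, `p₂ = s + t - j`, `p₁ = c + d - s - t`, and they are then all
satisfied. Substituting these values, the inequalities of (I) become exactly those of (II),
except `p₂ + q₂ - a ≤ p₁`, which becomes `0 ≤ e`.
-/

lemma sub_eq_and_add_two_mul_eq_of_three_mul {A B s t : ℤ}
    (hs : 3 * s = A + 2 * B) (ht : 3 * t = A - B) : s - t = B ∧ s + 2 * t = A := by
  omega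

/-- Proposition 2.4 of the paper (pure integer arithmetic): given `3s = (a+c-e)+2(b+d-f)` and
`3t = (a+c-e)-(b+d-f)`, there exists a `μ`-expansion of `λ = (a+b,b,0)` by `μ = (c+d,d,0)` of
shape `ν = (e+f+s,f+s,s)` with `p₃ = j` (characterized by the inequalities of Lemma 2.2) if and
only if `j` satisfies the listed inequalities. -/
theorem stmt9 (a b c d e f : ℕ) (s t j : ℤ)
    (hs : 3 * s = ((a : ℤ) + c - e) + 2 * ((b : ℤ) + d - f))
    (ht : 3 * t = ((a : ℤ) + c - e) - ((b : ℤ) + d - f)) :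
    (∃ p1 p2 p3 q1 q2 q3 : ℕ,
      (p3 : ℤ) = j ∧
      p2 ≤ a ∧
      p3 ≤ b ∧
      (p2 : ℤ) + q2 - a ≤ p1 ∧
      (p3 : ℤ) + q3 - b ≤ p2 ∧
      q1 = 0 ∧
      q2 ≤ p1 ∧
      q2 + q3 ≤ p1 + p2 ∧
      p1 + p2 + p3 = c + d ∧
      q1 + q2 + q3 = d ∧
      (a : ℤ) + b + p1 = e + f + s ∧
      (b : ℤ) + p2 + q2 = f + s ∧
      (p3 : ℤ) + q3 = s)
    ↔ (0 ≤ j ∧ j ≤ s + t ∧ s + t ≤ (c : ℤ) + d ∧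
       0 ≤ s - j ∧ s - j ≤ (d : ℤ) ∧
       s + t - j ≤ (a : ℤ) ∧ j ≤ (b : ℤ) ∧ j ≤ (b : ℤ) + t ∧
       j ≤ (c : ℤ) - t ∧ j ≤ (c : ℤ)) := by
  obtain ⟨hst, hs2t⟩ := sub_eq_and_add_two_mul_eq_of_three_mul hs ht
  constructor
  · rintro ⟨p1, p2, p3, q1, q2, q3, rfl, hp2a, hp3b, -, hp3q3, rfl, hq2p1, hqp, hp, hq, -, hrow2,
      hrow3⟩
    have hq3 : (q3 : ℤ) = s - p3 := by omega
    have hq2 : (q2 : ℤ) = d - s + p3 := by omega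
    have hp2 : (p2 : ℤ) = s + t - p3 := by omega
    have hp1 : (p1 : ℤ) = c + d - s - t := by omega
    omega
  · rintro ⟨hj0, hjst, hstcd, hsj0, hsjd, hsta, hjb, hjbt, hjct, hjc⟩
    refine ⟨(c + d - s - t).toNat, (s + t - j).toNat, j.toNat, 0, (d - s + j).toNat,
      (s - j).toNat, ?_⟩
    omega
end

section
/- Let d₁, d₂, n be nonnegative integers with n ≤ min(d₁, d₂). Then: (1) for all f ∈ V(d₁) and g ∈ V(d₂), the transvectant ψ_n(f,g) lies in V(d₁+d₂−2n); (2) ψ_n : V(d₁) × V(d₂) → V(d₁+d₂−2n) is ℂ-bilinear; (3) ψ_n is SL₂(ℂ)-equivariant, i.e. ψ_n(A·f, A·g) = A·ψ_n(f,g) for all A ∈ SL₂(ℂ); (4) ψ_n is onto, i.e. the ℂ-span of { ψ_n(f,g) : f ∈ V(d₁), g ∈ V(d₂) } is all of V(d₁+d₂−2n). -/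
/-!
Up to its normalising constant, `ψ_n(f,g)` is the restriction to the diagonal `y = x` of
`Ωⁿ (f(x) g(y))`, where `Ω = ∂²/∂x₁∂y₂ − ∂²/∂x₂∂y₁` is Cayley's Ω-process on polynomials in two
sets of variables. By the chain rule, substituting `z ↦ Bz` in both sets of variables turns `Ω`
into `det B • Ω`, so `ψ_n(f ∘ B, g ∘ B) = (det B)ⁿ • ψ_n(f,g) ∘ B`: this is the `SL₂`-equivariance.

For surjectivity, take `f = z₁^p z₂^(d₁-p)` and `g = z₁^q z₂^(d₂-q)` with `p = d₁` or `q = 0`.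
Then `∂f/∂z₂ = 0` or `∂g/∂z₁ = 0`, only the `i = 0` term of `ψ_n(f,g)` survives, and it is a
nonzero multiple of `z₁^(p+q-n) z₂^(d₁+d₂-p-q-n)`; every monomial of degree `d₁ + d₂ - 2n` arises.
-/

open MvPolynomial

noncomputable section

open scoped MatrixGroups

/-- the polynomial ring `ℂ[z₁,z₂]` -/
abbrev P2 : Type := MvPolynomial (Fin 2) ℂ

/-- `V(d) = Sym^d(ℂ²)`: homogeneous polynomials of degree `d` in `z₁, z₂` -/
def Vd (d : ℕ) : Submodule ℂ P2 := homogeneousSubmodule (Fin 2) ℂ d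

/-- The action of `SL₂(ℂ)` on polynomials by linear substitution, `(A·f)(z) = f(A⁻¹z)`. -/
def ρ (A : SL(2, ℂ)) : P2 →ₐ[ℂ] P2 :=
  aeval (fun i : Fin 2 => ∑ j : Fin 2, ((A⁻¹).val i j) • X j)

/-- the `n`-th transvectant
`ψ_n(f,g) = ((d₁−n)!/d₁!)((d₂−n)!/d₂!) Σᵢ (−1)ⁱ C(n,i) (∂ⁿf/∂z₁^{n−i}∂z₂^{i})·(∂ⁿg/∂z₁^{i}∂z₂^{n−i})` -/
def ψ (d₁ d₂ n : ℕ) (f g : P2) : P2 :=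
  ((((d₁ - n).factorial : ℂ) / (d₁.factorial : ℂ)) *
    (((d₂ - n).factorial : ℂ) / (d₂.factorial : ℂ))) •
  ∑ i ∈ Finset.range (n + 1), ((-1 : ℂ) ^ i * (n.choose i : ℂ)) •
    ((((pderiv (0 : Fin 2)).toLinearMap ^ (n - i)) (((pderiv (1 : Fin 2)).toLinearMap ^ i) f)) *
     (((pderiv (0 : Fin 2)).toLinearMap ^ i) (((pderiv (1 : Fin 2)).toLinearMap ^ (n - i)) g)))

namespace MvPolynomial

variable {R σ τ : Type*}

section CommRing

variable [CommRing R]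

theorem pderiv_pderiv_comm (i j : σ) (p : MvPolynomial σ R) :
    pderiv i (pderiv j p) = pderiv j (pderiv i p) := by
  classical
  have hbracket : ⁅pderiv i, pderiv j⁆ = (0 : Derivation R (MvPolynomial σ R) _) :=
    derivation_ext fun k => by
      rw [Derivation.commutator_apply]
      simp [pderiv_X, Pi.single_apply, apply_ite]
  have := DFunLike.congr_fun hbracket p
  rwa [Derivation.commutator_apply, Derivation.zero_apply, sub_eq_zero] at this

theorem commute_pderiv (i j : σ) :
    Commute (pderiv i).toLinearMap ((pderiv j).toLinearMap : Module.End R (MvPolynomial σ R)) :=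
  LinearMap.ext (pderiv_pderiv_comm i j)

theorem pderiv_pow_pderiv_pow_comm (i j : σ) (a b : ℕ) (p : MvPolynomial σ R) :
    ((pderiv i).toLinearMap ^ a) (((pderiv j).toLinearMap ^ b) p) =
      ((pderiv j).toLinearMap ^ b) (((pderiv i).toLinearMap ^ a) p) :=
  LinearMap.congr_fun ((commute_pderiv i j).pow_pow a b) p

end CommRing

section CommSemiring

variable [CommSemiring R]

theorem pderiv_pow_eq_zero {i : σ} {p : MvPolynomial σ R} (hp : pderiv i p = 0) {k : ℕ}
    (hk : k ≠ 0) : ((pderiv i).toLinearMap ^ k) p = 0 := by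
  obtain ⟨k, rfl⟩ := Nat.exists_eq_succ_of_ne_zero hk
  rw [pow_succ, Module.End.mul_apply, Derivation.coeFn_coe, hp, map_zero]

theorem pderiv_pow_monomial [DecidableEq σ] (i : σ) (k : ℕ) (m : σ →₀ ℕ) (a : R) :
    ((pderiv i).toLinearMap ^ k) (monomial m a) =
      monomial (m - Finsupp.single i k) (a * (m i).descFactorial k) := by
  induction k with
  | zero => simp
  | succ k ih =>
    rw [pow_succ', Module.End.mul_apply, ih, Derivation.coeFn_coe, pderiv_monomial, tsub_tsub,
      ← Finsupp.single_add, Nat.descFactorial_succ]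
    simp only [Finsupp.tsub_apply, Finsupp.single_eq_same, Nat.cast_mul]
    congr 1
    ring

theorem IsHomogeneous.pderiv_pow {φ : MvPolynomial σ R} {n : ℕ} (i : σ) (k : ℕ)
    (h : φ.IsHomogeneous n) : (((pderiv i).toLinearMap ^ k) φ).IsHomogeneous (n - k) := by
  induction k with
  | zero => simpa using h
  | succ k ih => simpa [pow_succ', Nat.sub_sub] using ih.pderiv (i := i)

variable (σ R) in
theorem homogeneousSubmodule_eq_span_monomial (n : ℕ) :
    homogeneousSubmodule σ R n =
      Submodule.span R ((fun m => monomial m 1) '' {m : σ →₀ ℕ | m.degree = n}) := by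
  rw [homogeneousSubmodule_eq_finsupp_supported, AddMonoidAlgebra.supported_eq_span_single]
  rfl

theorem pderiv_aeval [Fintype σ] [DecidableEq σ] (v : σ → MvPolynomial τ R) (k : τ)
    (p : MvPolynomial σ R) :
    pderiv k (aeval v p) = ∑ i, pderiv k (v i) * aeval v (pderiv i p) := by
  induction p using MvPolynomial.induction_on with
  | C a => simp
  | add p q hp hq => simp only [map_add, hp, hq, mul_add, Finset.sum_add_distrib]
  | mul_X p j hp =>
    simp only [map_mul, aeval_X, Derivation.leibniz, hp, pderiv_X, Pi.single_apply, smul_eq_mul,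
      map_add, mul_add, Finset.sum_add_distrib, mul_one, mul_zero, apply_ite, map_zero,
      Finset.sum_ite_eq, Finset.mem_univ, if_true, Finset.mul_sum, mul_left_comm (v j)]
    rw [mul_comm (aeval v p)]

def linSubst {ι : Type*} [Fintype ι] (B : Matrix ι ι R) :
    MvPolynomial ι R →ₐ[R] MvPolynomial ι R :=
  aeval fun i => ∑ j, B i j • X j

theorem pderiv_linSubst {ι : Type*} [Fintype ι] [DecidableEq ι] (B : Matrix ι ι R) (k : ι)
    (p : MvPolynomial ι R) :
    pderiv k (linSubst B p) = ∑ i, B i k • linSubst B (pderiv i p) := by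
  rw [linSubst, pderiv_aeval]
  refine Finset.sum_congr rfl fun i _ => ?_
  simp [map_sum, pderiv_X, Pi.single_apply]

def outerMul (f g : MvPolynomial σ R) : MvPolynomial (σ ⊕ σ) R :=
  rename Sum.inl f * rename Sum.inr g

def diagonal : MvPolynomial (σ ⊕ σ) R →ₐ[R] MvPolynomial σ R :=
  rename (Sum.elim id id)

theorem diagonal_outerMul (f g : MvPolynomial σ R) : diagonal (outerMul f g) = f * g := by
  simp [diagonal, outerMul, rename_rename]

theorem pderiv_inl_outerMul [DecidableEq σ] (j : σ) (f g : MvPolynomial σ R) :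
    pderiv (Sum.inl j) (outerMul f g) = outerMul (pderiv j f) g := by
  have hg : pderiv (Sum.inl j) (rename Sum.inr g : MvPolynomial (σ ⊕ σ) R) = 0 := by
    refine pderiv_eq_zero_of_notMem_vars fun h => ?_
    obtain ⟨x, -, hx⟩ := Finset.mem_image.mp (vars_rename _ _ h)
    exact Sum.inl_ne_inr hx.symm
  rw [outerMul, pderiv_mul, pderiv_rename Sum.inl_injective, hg, mul_zero, add_zero, outerMul]

theorem pderiv_inr_outerMul [DecidableEq σ] (j : σ) (f g : MvPolynomial σ R) :
    pderiv (Sum.inr j) (outerMul f g) = outerMul f (pderiv j g) := by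
  have hf : pderiv (Sum.inr j) (rename Sum.inl f : MvPolynomial (σ ⊕ σ) R) = 0 := by
    refine pderiv_eq_zero_of_notMem_vars fun h => ?_
    obtain ⟨x, -, hx⟩ := Finset.mem_image.mp (vars_rename _ _ h)
    exact Sum.inl_ne_inr hx
  rw [outerMul, pderiv_mul, pderiv_rename Sum.inr_injective, hf, zero_mul, zero_add, outerMul]

theorem pderiv_inl_mul_pderiv_inr_pow_outerMul [DecidableEq σ] (a b : σ) (k : ℕ)
    (f g : MvPolynomial σ R) :
    (((pderiv (Sum.inl a)).toLinearMap * (pderiv (Sum.inr b)).toLinearMap :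
        Module.End R (MvPolynomial (σ ⊕ σ) R)) ^ k) (outerMul f g) =
      outerMul (((pderiv a).toLinearMap ^ k) f) (((pderiv b).toLinearMap ^ k) g) := by
  induction k with
  | zero => simp
  | succ k ih =>
    simp only [pow_succ', Module.End.mul_apply, ih, Derivation.coeFn_coe, pderiv_inr_outerMul,
      pderiv_inl_outerMul]

theorem rename_inl_linSubst {ι : Type*} [Fintype ι] (B : Matrix ι ι R) (f : MvPolynomial ι R) :
    rename Sum.inl (linSubst B f) = linSubst (Matrix.fromBlocks B 0 0 B) (rename Sum.inl f) := by
  have : (rename Sum.inl).comp (linSubst B) =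
      (linSubst (Matrix.fromBlocks B 0 0 B)).comp (rename (R := R) Sum.inl) :=
    algHom_ext fun i => by simp [linSubst, Fintype.sum_sum_type, map_sum]
  exact AlgHom.congr_fun this f

theorem rename_inr_linSubst {ι : Type*} [Fintype ι] (B : Matrix ι ι R) (f : MvPolynomial ι R) :
    rename Sum.inr (linSubst B f) = linSubst (Matrix.fromBlocks B 0 0 B) (rename Sum.inr f) := by
  have : (rename Sum.inr).comp (linSubst B) =
      (linSubst (Matrix.fromBlocks B 0 0 B)).comp (rename (R := R) Sum.inr) :=
    algHom_ext fun i => by simp [linSubst, Fintype.sum_sum_type, map_sum]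
  exact AlgHom.congr_fun this f

theorem outerMul_linSubst {ι : Type*} [Fintype ι] (B : Matrix ι ι R) (f g : MvPolynomial ι R) :
    outerMul (linSubst B f) (linSubst B g) =
      linSubst (Matrix.fromBlocks B 0 0 B) (outerMul f g) := by
  rw [outerMul, outerMul, map_mul, rename_inl_linSubst, rename_inr_linSubst]

theorem diagonal_linSubst {ι : Type*} [Fintype ι] (B : Matrix ι ι R) (F : MvPolynomial (ι ⊕ ι) R) :
    diagonal (linSubst (Matrix.fromBlocks B 0 0 B) F) = linSubst B (diagonal F) := by
  have : diagonal.comp (linSubst (Matrix.fromBlocks B 0 0 B)) = (linSubst B).comp diagonal :=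
    algHom_ext fun s => by
      rcases s with i | i <;> simp [linSubst, diagonal, Fintype.sum_sum_type, map_sum]
  exact AlgHom.congr_fun this F

end CommSemiring

section CayleyOmega

variable {R : Type*} [CommRing R]

/-- Cayley's Ω-process `∂²/∂x₁∂y₂ − ∂²/∂x₂∂y₁`, where `x₁, x₂, y₁, y₂` are
`X (inl 0), X (inl 1), X (inr 0), X (inr 1)`. -/
def cayleyOmega : Module.End R (MvPolynomial (Fin 2 ⊕ Fin 2) R) :=
  (pderiv (Sum.inl 0)).toLinearMap * (pderiv (Sum.inr 1)).toLinearMap -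
    (pderiv (Sum.inl 1)).toLinearMap * (pderiv (Sum.inr 0)).toLinearMap

theorem cayleyOmega_pow_outerMul (n : ℕ) (f g : MvPolynomial (Fin 2) R) :
    (cayleyOmega ^ n) (outerMul f g) =
      ∑ i ∈ Finset.range (n + 1), ((-1 : R) ^ i * n.choose i) •
        outerMul (((pderiv 0).toLinearMap ^ (n - i)) (((pderiv 1).toLinearMap ^ i) f))
          (((pderiv 0).toLinearMap ^ i) (((pderiv 1).toLinearMap ^ (n - i)) g)) := by
  set P : Module.End R (MvPolynomial (Fin 2 ⊕ Fin 2) R) :=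
    (pderiv (Sum.inl 0)).toLinearMap * (pderiv (Sum.inr 1)).toLinearMap
  set Q : Module.End R (MvPolynomial (Fin 2 ⊕ Fin 2) R) :=
    (pderiv (Sum.inl 1)).toLinearMap * (pderiv (Sum.inr 0)).toLinearMap
  have hQP : Commute ((-1 : R) • Q) P :=
    (((commute_pderiv _ _).mul_right (commute_pderiv _ _)).mul_left
      ((commute_pderiv _ _).mul_right (commute_pderiv _ _))).smul_left _
  have hΩ : cayleyOmega = (-1 : R) • Q + P := by
    rw [neg_one_smul R Q, neg_add_eq_sub]; rfl
  rw [hΩ, hQP.add_pow, LinearMap.sum_apply]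
  refine Finset.sum_congr rfl fun i _ => ?_
  rw [smul_pow, Module.End.mul_apply, Module.End.mul_apply, Module.End.natCast_apply,
    LinearMap.smul_apply, ← Nat.cast_smul_eq_nsmul R, map_smul, map_smul,
    pderiv_inl_mul_pderiv_inr_pow_outerMul, pderiv_inl_mul_pderiv_inr_pow_outerMul,
    pderiv_pow_pderiv_pow_comm 1 0, smul_smul]

theorem cayleyOmega_linSubst (B : Matrix (Fin 2) (Fin 2) R) (F : MvPolynomial (Fin 2 ⊕ Fin 2) R) :
    cayleyOmega (linSubst (Matrix.fromBlocks B 0 0 B) F) =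
      B.det • linSubst (Matrix.fromBlocks B 0 0 B) (cayleyOmega F) := by
  have hl (k : Fin 2) (G : MvPolynomial (Fin 2 ⊕ Fin 2) R) :
      pderiv (Sum.inl k) (linSubst (Matrix.fromBlocks B 0 0 B) G) =
        ∑ i, B i k • linSubst (Matrix.fromBlocks B 0 0 B) (pderiv (Sum.inl i) G) := by
    simp [pderiv_linSubst, Fintype.sum_sum_type]
  have hr (k : Fin 2) (G : MvPolynomial (Fin 2 ⊕ Fin 2) R) :
      pderiv (Sum.inr k) (linSubst (Matrix.fromBlocks B 0 0 B) G) =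
        ∑ i, B i k • linSubst (Matrix.fromBlocks B 0 0 B) (pderiv (Sum.inr i) G) := by
    simp [pderiv_linSubst, Fintype.sum_sum_type]
  simp only [cayleyOmega, LinearMap.sub_apply, Module.End.mul_apply, Derivation.coeFn_coe, hl, hr,
    Fin.sum_univ_two, map_add, map_sub, Derivation.map_smul, Matrix.det_fin_two]
  module

theorem cayleyOmega_pow_linSubst (B : Matrix (Fin 2) (Fin 2) R) (n : ℕ)
    (F : MvPolynomial (Fin 2 ⊕ Fin 2) R) :
    (cayleyOmega ^ n) (linSubst (Matrix.fromBlocks B 0 0 B) F) =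
      B.det ^ n • linSubst (Matrix.fromBlocks B 0 0 B) ((cayleyOmega ^ n) F) := by
  induction n with
  | zero => simp
  | succ n ih =>
    rw [pow_succ', Module.End.mul_apply, ih, map_smul, cayleyOmega_linSubst, smul_smul, pow_succ,
      Module.End.mul_apply]

end CayleyOmega

end MvPolynomial

section Transvectant

open MvPolynomial

variable (d₁ d₂ n : ℕ)

theorem ψ_eq_smul_diagonal (f g : P2) :
    ψ d₁ d₂ n f g = ((((d₁ - n).factorial : ℂ) / d₁.factorial) *
      (((d₂ - n).factorial : ℂ) / d₂.factorial)) • diagonal ((cayleyOmega ^ n) (outerMul f g)) := by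
  simp only [cayleyOmega_pow_outerMul, map_sum, map_smul, diagonal_outerMul]
  rfl

theorem ψ_add_left (f f' g : P2) : ψ d₁ d₂ n (f + f') g = ψ d₁ d₂ n f g + ψ d₁ d₂ n f' g := by
  simp only [ψ, map_add, add_mul, smul_add, Finset.sum_add_distrib]

theorem ψ_add_right (f g g' : P2) : ψ d₁ d₂ n f (g + g') = ψ d₁ d₂ n f g + ψ d₁ d₂ n f g' := by
  simp only [ψ, map_add, mul_add, smul_add, Finset.sum_add_distrib]

theorem ψ_smul_left (c : ℂ) (f g : P2) : ψ d₁ d₂ n (c • f) g = c • ψ d₁ d₂ n f g := by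
  simp only [ψ, map_smul, smul_mul_assoc, Finset.smul_sum, smul_comm c]

theorem ψ_smul_right (c : ℂ) (f g : P2) : ψ d₁ d₂ n f (c • g) = c • ψ d₁ d₂ n f g := by
  simp only [ψ, map_smul, mul_smul_comm, Finset.smul_sum, smul_comm c]

theorem ψ_linSubst (B : Matrix (Fin 2) (Fin 2) ℂ) (f g : P2) :
    ψ d₁ d₂ n (linSubst B f) (linSubst B g) = B.det ^ n • linSubst B (ψ d₁ d₂ n f g) := by
  rw [ψ_eq_smul_diagonal, ψ_eq_smul_diagonal, outerMul_linSubst, cayleyOmega_pow_linSubst,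
    map_smul, diagonal_linSubst, map_smul, smul_comm]

theorem ψ_ρ (A : SL(2, ℂ)) (f g : P2) : ψ d₁ d₂ n (ρ A f) (ρ A g) = ρ A (ψ d₁ d₂ n f g) := by
  have := ψ_linSubst d₁ d₂ n (A⁻¹).val f g
  rwa [Matrix.SpecialLinearGroup.det_coe, one_pow, one_smul] at this

variable {d₁ d₂ n}

theorem ψ_mem_Vd (hn : n ≤ min d₁ d₂) {f g : P2} (hf : f ∈ Vd d₁) (hg : g ∈ Vd d₂) :
    ψ d₁ d₂ n f g ∈ Vd (d₁ + d₂ - 2 * n) := by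
  refine Submodule.smul_mem _ _ (Submodule.sum_mem _ fun i hi => Submodule.smul_mem _ _ ?_)
  have hin : i ≤ n := Nat.lt_succ_iff.mp (Finset.mem_range.mp hi)
  have hfg := ((hf.pderiv_pow 1 i).pderiv_pow 0 (n - i)).mul
    ((hg.pderiv_pow 1 (n - i)).pderiv_pow 0 i)
  rwa [show d₁ - i - (n - i) + (d₂ - (n - i) - i) = d₁ + d₂ - 2 * n by omega] at hfg

theorem ψ_eq_of_pderiv_eq_zero {f g : P2} (h : pderiv 1 f = 0 ∨ pderiv 0 g = 0) :
    ψ d₁ d₂ n f g = ((((d₁ - n).factorial : ℂ) / d₁.factorial) *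
      (((d₂ - n).factorial : ℂ) / d₂.factorial)) •
      (((pderiv 0).toLinearMap ^ n) f * ((pderiv 1).toLinearMap ^ n) g) := by
  rw [ψ, Finset.sum_eq_single_of_mem 0 (by simp)]
  · simp
  intro i _ hi
  rcases h with hf | hg
  · rw [pderiv_pow_eq_zero hf hi, map_zero, zero_mul, smul_zero]
  · rw [pderiv_pow_pderiv_pow_comm 0 1 i (n - i) g, pderiv_pow_eq_zero hg hi, map_zero, mul_zero,
      smul_zero]

theorem exists_ψ_eq_monomial (hn : n ≤ min d₁ d₂) {m : Fin 2 →₀ ℕ}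
    (hm : m.degree = d₁ + d₂ - 2 * n) :
    ∃ f ∈ Vd d₁, ∃ g ∈ Vd d₂, ∃ κ : ℂ, κ ≠ 0 ∧ ψ d₁ d₂ n f g = monomial m κ := by
  rw [Finsupp.degree_eq_sum, Fin.sum_univ_two] at hm
  have hn₁ : n ≤ d₁ := hn.trans (min_le_left _ _)
  have hn₂ : n ≤ d₂ := hn.trans (min_le_right _ _)
  set p := min (m 0 + n) d₁ with hp
  set q := m 0 + n - p with hq
  set f : P2 := monomial (Finsupp.single 0 p + Finsupp.single 1 (d₁ - p)) 1
  set g : P2 := monomial (Finsupp.single 0 q + Finsupp.single 1 (d₂ - q)) 1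
  have hf : f ∈ Vd d₁ :=
    isHomogeneous_monomial _ (by simp only [map_add, Finsupp.degree_single]; omega)
  have hg : g ∈ Vd d₂ :=
    isHomogeneous_monomial _ (by simp only [map_add, Finsupp.degree_single]; omega)
  have hvanish : pderiv 1 f = 0 ∨ pderiv 0 g = 0 := by
    rcases le_total (m 0 + n) d₁ with h | h
    · right
      simp [g, pderiv_monomial, hq, hp, h]
    · left
      simp [f, pderiv_monomial, hp, h]
  have hψ : ψ d₁ d₂ n f g = monomial m
      ((((d₁ - n).factorial : ℂ) / d₁.factorial) * (((d₂ - n).factorial : ℂ) / d₂.factorial) *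
        (p.descFactorial n * (d₂ - q).descFactorial n)) := by
    rw [ψ_eq_of_pderiv_eq_zero hvanish, pderiv_pow_monomial, pderiv_pow_monomial, monomial_mul,
      smul_monomial]
    refine congr_arg₂ (fun e c => monomial e c) (Finsupp.ext fun a => ?_) ?_
    · fin_cases a <;> simp <;> omega
    · simp
  refine ⟨f, hf, g, hg, _, ?_, hψ⟩
  have hpn : n ≤ p := by omega
  have hqn : n ≤ d₂ - q := by omega
  simp [Nat.factorial_ne_zero, Nat.descFactorial_eq_zero_iff_lt, hpn, hqn]

theorem span_ψ_eq_Vd (hn : n ≤ min d₁ d₂) :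
    Submodule.span ℂ {h : P2 | ∃ f ∈ Vd d₁, ∃ g ∈ Vd d₂, h = ψ d₁ d₂ n f g} =
      Vd (d₁ + d₂ - 2 * n) := by
  refine le_antisymm (Submodule.span_le.mpr ?_) ?_
  · rintro _ ⟨f, hf, g, hg, rfl⟩
    exact ψ_mem_Vd hn hf hg
  rw [Vd, homogeneousSubmodule_eq_span_monomial, Submodule.span_le]
  rintro _ ⟨m, hm, rfl⟩
  obtain ⟨f, hf, g, hg, κ, hκ, hψ⟩ := exists_ψ_eq_monomial hn hm
  have hmono : monomial m (1 : ℂ) = κ⁻¹ • ψ d₁ d₂ n f g := by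
    rw [hψ, smul_monomial, smul_eq_mul, inv_mul_cancel₀ hκ]
  change monomial m (1 : ℂ) ∈ _
  rw [hmono]
  exact Submodule.smul_mem _ _ (Submodule.subset_span ⟨f, hf, g, hg, rfl⟩)

end Transvectant

/-- The transvectant `ψ_n : V(d₁) × V(d₂) → V(d₁+d₂−2n)` is well defined, `ℂ`-bilinear,
`SL₂(ℂ)`-equivariant and onto. -/
theorem stmt12 (d₁ d₂ n : ℕ) (hn : n ≤ min d₁ d₂) :
    (∀ f ∈ Vd d₁, ∀ g ∈ Vd d₂, ψ d₁ d₂ n f g ∈ Vd (d₁ + d₂ - 2 * n)) ∧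
    (∀ f ∈ Vd d₁, ∀ f' ∈ Vd d₁, ∀ g ∈ Vd d₂,
      ψ d₁ d₂ n (f + f') g = ψ d₁ d₂ n f g + ψ d₁ d₂ n f' g) ∧
    (∀ (c : ℂ), ∀ f ∈ Vd d₁, ∀ g ∈ Vd d₂, ψ d₁ d₂ n (c • f) g = c • ψ d₁ d₂ n f g) ∧
    (∀ f ∈ Vd d₁, ∀ g ∈ Vd d₂, ∀ g' ∈ Vd d₂,
      ψ d₁ d₂ n f (g + g') = ψ d₁ d₂ n f g + ψ d₁ d₂ n f g') ∧
    (∀ (c : ℂ), ∀ f ∈ Vd d₁, ∀ g ∈ Vd d₂, ψ d₁ d₂ n f (c • g) = c • ψ d₁ d₂ n f g) ∧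
    (∀ A : SL(2, ℂ), ∀ f ∈ Vd d₁, ∀ g ∈ Vd d₂,
      ψ d₁ d₂ n (ρ A f) (ρ A g) = ρ A (ψ d₁ d₂ n f g)) ∧
    (Submodule.span ℂ {h : P2 | ∃ f ∈ Vd d₁, ∃ g ∈ Vd d₂, h = ψ d₁ d₂ n f g} =
      Vd (d₁ + d₂ - 2 * n)) :=
  ⟨fun _ hf _ hg => ψ_mem_Vd hn hf hg,
    fun f _ f' _ g _ => ψ_add_left d₁ d₂ n f f' g,
    fun c f _ g _ => ψ_smul_left d₁ d₂ n c f g,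
    fun f _ g _ g' _ => ψ_add_right d₁ d₂ n f g g',
    fun c f _ g _ => ψ_smul_right d₁ d₂ n c f g,
    fun A f _ g _ => ψ_ρ d₁ d₂ n A f g,
    span_ψ_eq_Vd hn⟩
end
end
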